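/- Let n ≥ 3 and let z ∈ ℤ^{1,n} satisfy ⟨z,z⟩ ≥ −1 and either ⟨z, e₀⟩ > 0 or z = e_i for some 1 ≤ i ≤ n. Then for every w ∈ W_n, either ⟨w(z), e₀⟩ > 0 or w(z) = e_j for some 1 ≤ j ≤ n. -/

import Mathlib

/-- The standard bilinear form on `ℤ^{1,n}`: `⟨x,y⟩ = x₀y₀ - ∑_{i=1}^n xᵢyᵢ`. -/
def B {n : ℕ} (x y : Fin (n + 1) → ℤ) : ℤ :=
  x 0 * y 0 - ∑ i : Fin n, x i.succ * y i.succ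

/-- The simple roots `α₀ = e₀ - e₁ - e₂ - e₃` and `αᵢ = eᵢ - e_{i+1}` (`1 ≤ i ≤ n-1`). -/
def alphaGen {n : ℕ} (i : Fin n) : Fin (n + 1) → ℤ :=
  if i.val = 0 then
    Pi.single 0 1 - Pi.single 1 1 - Pi.single 2 1 - Pi.single 3 1
  else
    Pi.single i.castSucc 1 - Pi.single i.succ 1

/-- The Coxeter group `W_n ⊆ GL(ℤ^{1,n})` generated by the reflections
`sᵢ : x ↦ x + ⟨x,αᵢ⟩·αᵢ`. -/
def Wgrp (n : ℕ) : Subgroup ((Fin (n + 1) → ℤ) ≃ₗ[ℤ] (Fin (n + 1) → ℤ)) :=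
  Subgroup.closure
    {g | ∃ i : Fin n, ∀ x : Fin (n + 1) → ℤ, g x = x + B x (alphaGen i) • alphaGen i}

/-
Every generator `sᵢ` maps the set of vectors `z` with `⟨z,z⟩ ≥ -1` and (`z₀ > 0` or `z = eⱼ`)
into itself; since the `sᵢ` are involutions, so does all of `W_n`. For `i ≥ 1`, `sᵢ` swaps the
coordinates `i` and `i + 1`. For `s₀`, the new zeroth coordinate is `2z₀ + z₁ + z₂ + z₃`. If it is
`≤ 0` while `z₀ > 0`, then `(z₁ + z₂ + z₃)² ≤ 3(z₁² + z₂² + z₃²) ≤ 3(z₀² + 1)` forces `z₀ = 1`,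
`z₁ + z₂ + z₃ = -2` and `⟨z,z⟩ = -1`. Then `s₀z` has zeroth coordinate `0` and norm `-1`, so it is
`±eⱼ`, and the sign is `+` because `⟨s₀z, α₀⟩ = -⟨z, α₀⟩ = 1` while `⟨eⱼ, α₀⟩ ≥ 0`.
-/

section Form

variable {n : ℕ}

lemma B_comm (x y : Fin (n + 1) → ℤ) : B x y = B y x := by
  simp only [B, mul_comm]

lemma B_add_left (x y v : Fin (n + 1) → ℤ) : B (x + y) v = B x v + B y v := by
  simp only [B, Pi.add_apply, add_mul, Finset.sum_add_distrib]; ring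

lemma B_smul_left (c : ℤ) (x v : Fin (n + 1) → ℤ) : B (c • x) v = c * B x v := by
  simp only [B, Pi.smul_apply, smul_eq_mul, mul_sub, Finset.mul_sum, mul_assoc]

lemma B_neg_left (x v : Fin (n + 1) → ℤ) : B (-x) v = -B x v := by
  simp only [B, Pi.neg_apply, neg_mul, Finset.sum_neg_distrib]; ring

lemma B_add_right (x y v : Fin (n + 1) → ℤ) : B x (y + v) = B x y + B x v := by
  rw [B_comm, B_add_left, B_comm y, B_comm v]

lemma B_sub_right (x y v : Fin (n + 1) → ℤ) : B x (y - v) = B x y - B x v := by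
  simp only [B, Pi.sub_apply, mul_sub, Finset.sum_sub_distrib]; ring

lemma B_smul_right (c : ℤ) (x v : Fin (n + 1) → ℤ) : B x (c • v) = c * B x v := by
  rw [B_comm, B_smul_left, B_comm v]

lemma B_single_zero (x : Fin (n + 1) → ℤ) : B x (Pi.single 0 1) = x 0 := by
  simp [B, Fin.succ_ne_zero]

lemma B_single_of_ne_zero (x : Fin (n + 1) → ℤ) {c : Fin (n + 1)} (hc : c ≠ 0) :
    B x (Pi.single c 1) = -x c := by
  obtain ⟨k, rfl⟩ := Fin.exists_succ_eq.2 hc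
  simp [B, Pi.single_apply, Fin.succ_ne_zero]

lemma exists_eq_single_or_eq_neg_single {x : Fin (n + 1) → ℤ} (hx0 : x 0 = 0) (hx : B x x = -1) :
    ∃ j : Fin n, x = Pi.single j.succ 1 ∨ x = -Pi.single j.succ 1 := by
  have hsum : ∑ k : Fin n, x k.succ * x k.succ = 1 := by
    simp only [B, hx0, mul_zero, zero_sub] at hx; linarith
  obtain ⟨j, hj⟩ : ∃ j : Fin n, x j.succ ≠ 0 := by
    by_contra! h
    simp [h] at hsum
  have hrest_nonneg : 0 ≤ ∑ k ∈ Finset.univ.erase j, x k.succ * x k.succ :=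
    Finset.sum_nonneg fun k _ => mul_self_nonneg _
  have hj_pos : 0 < x j.succ * x j.succ := mul_self_pos.2 hj
  rw [← Finset.add_sum_erase _ _ (Finset.mem_univ j)] at hsum
  have hrest : ∀ k ≠ j, x k.succ = 0 := by
    intro k hk
    have := (Finset.sum_eq_zero_iff_of_nonneg fun k _ => mul_self_nonneg (x k.succ)).1
      (by linarith) k (Finset.mem_erase.2 ⟨hk, Finset.mem_univ k⟩)
    exact mul_self_eq_zero.1 this
  have hx_eq : x = x j.succ • Pi.single j.succ 1 := by
    funext k
    induction k using Fin.cases with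
    | zero => simp [hx0]
    | succ k =>
      by_cases hk : k = j
      · subst hk; simp
      · simp [hrest k hk, hk]
  refine ⟨j, ?_⟩
  rcases mul_self_eq_one_iff.1 (by linarith : x j.succ * x j.succ = 1) with h | h
  · left; rw [hx_eq, h, one_smul]
  · right; rw [hx_eq, h, neg_one_smul]

lemma mul_self_add_mul_self_add_mul_self_le (hn : 3 ≤ n) (x : Fin (n + 1) → ℤ) :
    x 1 * x 1 + x 2 * x 2 + x 3 * x 3 ≤ x 0 * x 0 - B x x := by
  obtain ⟨m, rfl⟩ := Nat.exists_eq_add_of_le' hn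
  have htail : 0 ≤ ∑ k : Fin m, x k.succ.succ.succ.succ * x k.succ.succ.succ.succ :=
    Finset.sum_nonneg fun k _ => mul_self_nonneg _
  have h3 : (Fin.succ 2 : Fin (m + 3 + 1)) = 3 := rfl
  simp only [B, Fin.sum_univ_succ, Fin.succ_zero_eq_one, Fin.succ_one_eq_two, h3]
  linarith

end Form

section Reflection

variable {n : ℕ}

def reflect (a x : Fin (n + 1) → ℤ) : Fin (n + 1) → ℤ :=
  x + B x a • a

lemma reflect_apply (a x : Fin (n + 1) → ℤ) (k : Fin (n + 1)) :
    reflect a x k = x k + B x a * a k := rfl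

variable {a : Fin (n + 1) → ℤ}

lemma B_reflect_root (ha : B a a = -2) (x : Fin (n + 1) → ℤ) : B (reflect a x) a = -B x a := by
  rw [reflect, B_add_left, B_smul_left, ha]; ring

lemma reflect_reflect (ha : B a a = -2) (x : Fin (n + 1) → ℤ) : reflect a (reflect a x) = x := by
  rw [reflect, B_reflect_root ha, reflect, neg_smul]; abel

lemma B_reflect_reflect (ha : B a a = -2) (x y : Fin (n + 1) → ℤ) :
    B (reflect a x) (reflect a y) = B x y := by
  simp only [reflect, B_add_left, B_add_right, B_smul_left, B_smul_right, ha]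
  rw [B_comm a y]; ring

end Reflection

section Roots

variable {n : ℕ} {i : Fin n}

lemma val_one_two_three (hn : 3 ≤ n) :
    ((1 : Fin (n + 1)) : ℕ) = 1 ∧ ((2 : Fin (n + 1)) : ℕ) = 2 ∧ ((3 : Fin (n + 1)) : ℕ) = 3 := by
  simp; omega

lemma alphaGen_of_val_eq_zero (hi : i.val = 0) :
    alphaGen i = Pi.single 0 1 - Pi.single 1 1 - Pi.single 2 1 - Pi.single 3 1 := if_pos hi

lemma alphaGen_of_val_ne_zero (hi : i.val ≠ 0) :
    alphaGen i = Pi.single i.castSucc 1 - Pi.single i.succ 1 := if_neg hi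

lemma alphaGen_apply_of_val_eq_zero (hn : 3 ≤ n) (hi : i.val = 0) :
    alphaGen i 0 = 1 ∧ alphaGen i 1 = -1 ∧ alphaGen i 2 = -1 ∧ alphaGen i 3 = -1 := by
  obtain ⟨h1, h2, h3⟩ := val_one_two_three hn
  simp only [alphaGen_of_val_eq_zero hi, Pi.sub_apply, Pi.single_apply, Fin.ext_iff, h1, h2, h3,
    Fin.val_zero]
  norm_num

lemma B_alphaGen_of_val_eq_zero (hn : 3 ≤ n) (hi : i.val = 0) (x : Fin (n + 1) → ℤ) :
    B x (alphaGen i) = x 0 + x 1 + x 2 + x 3 := by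
  obtain ⟨h1, h2, h3⟩ := val_one_two_three hn
  have hne : ∀ c : Fin (n + 1), c.val ≠ 0 → c ≠ 0 := fun c hc => Fin.ne_of_val_ne hc
  rw [alphaGen_of_val_eq_zero hi, B_sub_right, B_sub_right, B_sub_right, B_single_zero,
    B_single_of_ne_zero x (hne 1 (by omega)), B_single_of_ne_zero x (hne 2 (by omega)),
    B_single_of_ne_zero x (hne 3 (by omega))]
  ring

lemma B_alphaGen_of_val_ne_zero (hi : i.val ≠ 0) (x : Fin (n + 1) → ℤ) :
    B x (alphaGen i) = x i.succ - x i.castSucc := by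
  rw [alphaGen_of_val_ne_zero hi, B_sub_right, B_single_of_ne_zero x (Fin.ne_of_val_ne hi),
    B_single_of_ne_zero x i.succ_ne_zero]
  ring

lemma B_alphaGen_self (hn : 3 ≤ n) (i : Fin n) : B (alphaGen i) (alphaGen i) = -2 := by
  by_cases hi : i.val = 0
  · obtain ⟨h0, h1, h2, h3⟩ := alphaGen_apply_of_val_eq_zero hn hi
    rw [B_alphaGen_of_val_eq_zero hn hi, h0, h1, h2, h3]
    norm_num
  · have hne : i.castSucc ≠ i.succ := Fin.castSucc_lt_succ.ne
    rw [B_alphaGen_of_val_ne_zero hi, alphaGen_of_val_ne_zero hi]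
    simp [hne, hne.symm]

lemma reflect_alphaGen_of_val_ne_zero (hi : i.val ≠ 0) (x : Fin (n + 1) → ℤ) :
    reflect (alphaGen i) x = x ∘ Equiv.swap i.castSucc i.succ := by
  have hne : i.castSucc ≠ i.succ := Fin.castSucc_lt_succ.ne
  funext k
  rw [reflect_apply, B_alphaGen_of_val_ne_zero hi, alphaGen_of_val_ne_zero hi]
  by_cases hk : k = i.castSucc
  · subst hk; simp [hne]
  by_cases hk' : k = i.succ
  · subst hk'; simp [hne.symm]
  · simp [hk, hk', Equiv.swap_apply_of_ne_of_ne]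

lemma B_single_succ_alphaGen_nonneg (hn : 3 ≤ n) (hi : i.val = 0) (j : Fin n) :
    0 ≤ B (Pi.single j.succ 1) (alphaGen i) := by
  have h : ∀ k, 0 ≤ (Pi.single j.succ 1 : Fin (n + 1) → ℤ) k := fun k => by
    rw [Pi.single_apply]; split_ifs <;> norm_num
  rw [B_alphaGen_of_val_eq_zero hn hi]
  linarith [h 0, h 1, h 2, h 3]

end Roots

section Admissible

variable {n : ℕ} {i : Fin n}

def Admissible (z : Fin (n + 1) → ℤ) : Prop :=
  -1 ≤ B z z ∧ (0 < z 0 ∨ ∃ j : Fin n, z = Pi.single j.succ 1)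

lemma exists_reflect_eq_single_of_apply_zero_nonpos (hn : 3 ≤ n) (hi : i.val = 0)
    {x : Fin (n + 1) → ℤ} (hx : -1 ≤ B x x) (hx0 : 0 < x 0)
    (hle : reflect (alphaGen i) x 0 ≤ 0) :
    ∃ j : Fin n, reflect (alphaGen i) x = Pi.single j.succ 1 := by
  set y := reflect (alphaGen i) x with hy
  have hα := B_alphaGen_of_val_eq_zero hn hi
  have hy0 : y 0 = 2 * x 0 + x 1 + x 2 + x 3 := by
    rw [hy, reflect_apply, hα, (alphaGen_apply_of_val_eq_zero hn hi).1]; ring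
  rw [hy0] at hle
  have hsq := mul_self_add_mul_self_add_mul_self_le hn x
  have h12 := sq_nonneg (x 1 - x 2)
  have h13 := sq_nonneg (x 1 - x 3)
  have h23 := sq_nonneg (x 2 - x 3)
  have hx1 : x 0 = 1 := by nlinarith
  rw [hx1] at hsq hle
  have ht : x 1 + x 2 + x 3 = -2 := by nlinarith
  have hxx : B x x = -1 := by nlinarith
  have hyy : B y y = -1 := by rw [hy, B_reflect_reflect (B_alphaGen_self hn i), hxx]
  have hyα : B y (alphaGen i) = 1 := by
    rw [hy, B_reflect_root (B_alphaGen_self hn i), hα]; linarith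
  obtain ⟨j, hj | hj⟩ := exists_eq_single_or_eq_neg_single (by linarith) hyy
  · exact ⟨j, hj⟩
  · have := B_single_succ_alphaGen_nonneg hn hi j
    rw [hj, B_neg_left] at hyα
    linarith

lemma Admissible.reflect_alphaGen (hn : 3 ≤ n) (i : Fin n) {z : Fin (n + 1) → ℤ}
    (hz : Admissible z) : Admissible (reflect (alphaGen i) z) := by
  refine ⟨by rw [B_reflect_reflect (B_alphaGen_self hn i)]; exact hz.1, ?_⟩
  by_cases hi : i.val = 0
  · rcases hz.2 with hz0 | ⟨j, rfl⟩
    · rcases le_or_gt (reflect (alphaGen i) z 0) 0 with hle | hpos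
      · exact .inr (exists_reflect_eq_single_of_apply_zero_nonpos hn hi hz.1 hz0 hle)
      · exact .inl hpos
    · rcases (B_single_succ_alphaGen_nonneg hn hi j).eq_or_lt with h | h
      · exact .inr ⟨j, by rw [reflect, ← h, zero_smul, add_zero]⟩
      · left
        rw [reflect_apply, (alphaGen_apply_of_val_eq_zero hn hi).1]
        simpa [Fin.succ_ne_zero] using h
  · have hσ0 : Equiv.swap i.castSucc i.succ 0 = 0 :=
      Equiv.swap_apply_of_ne_of_ne (Fin.ne_of_val_ne (Ne.symm hi)) (Fin.succ_ne_zero i).symm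
    rw [reflect_alphaGen_of_val_ne_zero hi]
    rcases hz.2 with hz0 | ⟨j, rfl⟩
    · exact .inl (by rwa [Function.comp_apply, hσ0])
    · have hσj : Equiv.swap i.castSucc i.succ j.succ ≠ 0 :=
        hσ0 ▸ (Equiv.injective _).ne (Fin.succ_ne_zero j)
      refine .inr ⟨(Equiv.swap i.castSucc i.succ j.succ).pred hσj, ?_⟩
      rw [Pi.single_comp_equiv, Equiv.symm_swap, Fin.succ_pred]

lemma Admissible.apply_of_mem_Wgrp (hn : 3 ≤ n) {w : (Fin (n + 1) → ℤ) ≃ₗ[ℤ] (Fin (n + 1) → ℤ)}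
    (hw : w ∈ Wgrp n) {z : Fin (n + 1) → ℤ} (hz : Admissible z) : Admissible (w z) := by
  induction hw using Subgroup.closure_induction'' generalizing z with
  | mem g hg =>
    obtain ⟨i, hg⟩ := hg
    rw [hg]
    exact hz.reflect_alphaGen hn i
  | inv_mem g hg =>
    obtain ⟨i, hg⟩ := hg
    have hinv : g⁻¹ z = g z := by
      rw [LinearEquiv.coe_inv, LinearEquiv.symm_apply_eq, hg, hg]
      exact (reflect_reflect (B_alphaGen_self hn i) z).symm
    rw [hinv, hg]
    exact hz.reflect_alphaGen hn i
  | one => exact hz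
  | mul g h _ _ ihg ihh => exact ihg (ihh hz)

end Admissible

/-- if `⟨z,z⟩ ≥ -1` and (`⟨z,e₀⟩ > 0` or `z = eᵢ` for some `i ≥ 1`), then
for every `w ∈ W_n`, either `⟨w(z),e₀⟩ > 0` or `w(z) = eⱼ` for some `j ≥ 1`. -/
theorem W_preserves_positivity (n : ℕ) (hn : 3 ≤ n) (z : Fin (n + 1) → ℤ)
    (hz : -1 ≤ B z z)
    (hz0 : 0 < B z (Pi.single 0 1) ∨ ∃ i : Fin n, z = Pi.single i.succ 1)
    (w : (Fin (n + 1) → ℤ) ≃ₗ[ℤ] (Fin (n + 1) → ℤ)) (hw : w ∈ Wgrp n) :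
    0 < B (w z) (Pi.single 0 1) ∨ ∃ j : Fin n, w z = Pi.single j.succ 1 := by
  rw [B_single_zero] at hz0 ⊢
  exact (Admissible.apply_of_mem_Wgrp hn hw ⟨hz, hz0⟩).2
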